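/- Let p be a prime, ξ_p a primitive p-th root of unity, O = Z[ξ_p], A an ideal of O, and a ∈ A with a ∉ (ξ_p − 1)A. Let (A,a) denote the Z-module A ⊕ Z with the order-p automorphism φ·(x,k) = (ξ_p x + k a, k). Then (A,a) ⊗ F_p is isomorphic as an F_p[G]-module to N_p, the single unipotent Jordan block of size p. -/

import Mathlib

/-!
Put `N = φ - 1` on `V = (A, a) ⊗ 𝔽ₚ` and `v = 1 ⊗ (0, 1)`, so that
`N^(k+1) v = 1 ⊗ ((ζ - 1)^k a, 0)`. Since `A` has `ℤ`-rank `p - 1`, `V` has dimension `p`.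
As `(ζ - 1)^(p-1)` is `p` times a unit, `N^p v = 0`, while `N^(p-1) v = 0` would put
`(ζ - 1)^(p-2) a` in `pA = (ζ - 1)^(p-1) A`, i.e. `a ∈ (ζ - 1) A`. Hence
`N^(p-1) v, …, N v, v` is a basis of `V`, and in it `φ = 1 + N` is the Jordan block.
-/

open scoped TensorProduct

/-- The unipotent Jordan block of size `q` over `𝔽ₚ`. -/
def jordanBlock (p q : ℕ) : Matrix (Fin q) (Fin q) (ZMod p) :=
  Matrix.of fun i j => if j = i then 1 else if (i : ℕ) + 1 = (j : ℕ) then 1 else 0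

open Module Polynomial

theorem linearIndependent_pow_apply {K V : Type*} [Field K] [AddCommGroup V] [Module K V]
    {N : End K V} {v : V} {n : ℕ} (hzero : (N ^ n) v = 0) (hne : ∀ m < n, (N ^ m) v ≠ 0) :
    LinearIndependent K fun i : Fin n ↦ (N ^ (i : ℕ)) v := by
  induction n generalizing v with
  | zero => exact linearIndependent_empty_type
  | succ n ih =>
    have hcons : (fun i : Fin (n + 1) ↦ (N ^ (i : ℕ)) v) =
        Fin.cons v fun i : Fin n ↦ (N ^ (i : ℕ)) (N v) := by
      ext i
      refine Fin.cases ?_ (fun i ↦ ?_) i <;> simp [pow_succ]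
    rw [hcons, linearIndependent_finCons]
    refine ⟨ih ?_ fun m hm ↦ ?_, fun hv ↦ hne n n.lt_succ_self ?_⟩
    · rwa [← End.mul_apply, ← pow_succ]
    · rw [← End.mul_apply, ← pow_succ]
      exact hne _ (by omega)
    · refine LinearMap.mem_ker.mp <| Submodule.span_le.mpr (Set.range_subset_iff.mpr fun i ↦ ?_) hv
      rw [SetLike.mem_coe, LinearMap.mem_ker, ← End.mul_apply, ← End.mul_apply, ← pow_add,
        ← pow_succ, show n + i + 1 = i + (n + 1) by omega, pow_add, End.mul_apply, hzero, map_zero]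

theorem exists_linearEquiv_comp_eq_jordanBlock {p q : ℕ} [Fact p.Prime] {V : Type*}
    [AddCommGroup V] [Module (ZMod p) V] {f : End (ZMod p) V} {v : V}
    (hdim : finrank (ZMod p) V = q) (hzero : ((f - 1) ^ q) v = 0)
    (hne : ((f - 1) ^ (q - 1)) v ≠ 0) :
    ∃ e : V ≃ₗ[ZMod p] (Fin q → ZMod p), ∀ w, e (f w) = Matrix.toLin' (jordanBlock p q) (e w) := by
  set N := f - 1
  have hne' : ∀ m < q, (N ^ m) v ≠ 0 := fun m hm h ↦ hne <| by
    rw [show q - 1 = (q - 1 - m) + m by omega, pow_add, End.mul_apply, h, map_zero]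
  obtain ⟨n, rfl⟩ : ∃ n, q = n + 1 :=
    Nat.exists_eq_add_one.mpr (Nat.pos_of_ne_zero fun h ↦ by subst h; exact hne hzero)
  -- reversed, because the off-diagonal entries of `jordanBlock` lie above the diagonal
  let B := basisOfLinearIndependentOfCardEqFinrank
    ((linearIndependent_pow_apply hzero hne').comp Fin.rev Fin.rev_injective) (by simp [hdim])
  have hB : ∀ i, B i = (N ^ (Fin.rev i : ℕ)) v := fun i ↦ by simp [B]
  have hf : f = 1 + N := by simp [N]
  have hmatrix : LinearMap.toMatrix B B f = jordanBlock p (n + 1) := by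
    ext i j
    rw [LinearMap.toMatrix_apply, hf, LinearMap.add_apply, End.one_apply, map_add, B.repr_self]
    refine Fin.cases ?_ (fun k ↦ ?_) j
    · rw [hB, ← End.mul_apply, ← pow_succ', Fin.rev_zero, Fin.val_last, hzero, map_zero,
        add_zero, Finsupp.single_apply]
      simp only [jordanBlock, Matrix.of_apply, Fin.ext_iff, Fin.val_zero]
      split_ifs <;> simp_all
    · have hk : N (B k.succ) = B k.castSucc := by
        rw [hB, hB, ← End.mul_apply, ← pow_succ']
        congr 2
        simp only [Fin.val_rev, Fin.val_succ, Fin.val_castSucc]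
        omega
      rw [hk, B.repr_self, Finsupp.add_apply, Finsupp.single_apply, Finsupp.single_apply]
      simp only [jordanBlock, Matrix.of_apply, Fin.ext_iff, Fin.val_succ, Fin.val_castSucc]
      split_ifs <;> first | omega | simp
  refine ⟨B.equivFun, fun w ↦ ?_⟩
  rw [B.equivFun_apply, B.equivFun_apply, ← LinearMap.toMatrix_mulVec_repr B B, hmatrix,
    Matrix.toLin'_apply]

theorem IsPrimitiveRoot.associated_sub_one_pow_prime {A : Type*} [CommRing A] [IsDomain A] {ζ : A}
    {p : ℕ} [hp : Fact p.Prime] (hζ : IsPrimitiveRoot ζ p) :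
    Associated ((ζ - 1) ^ (p - 1)) (p : A) := by
  rw [← eval_one_cyclotomic_prime (R := A) (p := p), cyclotomic_eq_prod_X_sub_primitiveRoots hζ,
    eval_prod]
  simp only [eval_sub, eval_X, eval_C]
  rw [← Nat.totient_prime hp.out, ← hζ.card_primitiveRoots, ← Finset.prod_const]
  refine Associated.prod _ _ _ fun η hη ↦ ?_
  obtain ⟨i, -, hi, rfl⟩ := hζ.isPrimitiveRoot_iff.mp (isPrimitiveRoot_of_mem_primitiveRoots hη)
  simpa using (hζ.associated_sub_one_pow_sub_one_of_coprime hi).neg_right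

section IntegralBasis

variable {O : Type*} [CommRing O] [IsDomain O] [CharZero O] {ζ : O} {n : ℕ}

theorem IsPrimitiveRoot.minpoly_int_eq_cyclotomic (hζ : IsPrimitiveRoot ζ n) (hn : 0 < n) :
    minpoly ℤ ζ = cyclotomic n ℤ := by
  have hint := hζ.isIntegral hn
  have hroot : aeval ζ (cyclotomic n ℤ) = 0 := by
    rw [aeval_def, ← eval_map, map_cyclotomic]
    exact hζ.isRoot_cyclotomic hn
  exact eq_of_monic_of_associated (minpoly.monic hint) (cyclotomic.monic n ℤ)
    ((minpoly.irreducible hint).associated_of_dvd (cyclotomic.irreducible hn)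
      (minpoly.isIntegrallyClosed_dvd hint hroot))

theorem IsPrimitiveRoot.finite_int_of_adjoin_eq_top (hζ : IsPrimitiveRoot ζ n) (hn : 0 < n)
    (hO : Algebra.adjoin ℤ {ζ} = ⊤) : Module.Finite ℤ O :=
  .of_basis (PowerBasis.ofAdjoinEqTop' (hζ.isIntegral hn) hO).basis

theorem IsPrimitiveRoot.finrank_int_eq_totient (hζ : IsPrimitiveRoot ζ n) (hn : 0 < n)
    (hO : Algebra.adjoin ℤ {ζ} = ⊤) : finrank ℤ O = n.totient := by
  rw [(PowerBasis.ofAdjoinEqTop' (hζ.isIntegral hn) hO).finrank, PowerBasis.ofAdjoinEqTop'_dim,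
    hζ.minpoly_int_eq_cyclotomic hn, natDegree_cyclotomic]

theorem IsPrimitiveRoot.finrank_int_ideal_eq_totient (hζ : IsPrimitiveRoot ζ n) (hn : 0 < n)
    (hO : Algebra.adjoin ℤ {ζ} = ⊤) {A : Ideal O} (hA : A ≠ ⊥) : finrank ℤ A = n.totient := by
  have := hζ.finite_int_of_adjoin_eq_top hn hO
  rw [← hζ.finrank_int_eq_totient hn hO]
  exact Ideal.finrank_eq_finrank (Free.chooseBasis ℤ O) A hA

end IntegralBasis

theorem one_tmul_eq_zero_iff_exists_eq_smul {n : ℕ} {M : Type*} [AddCommGroup M] [Module.Free ℤ M]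
    (x : M) : (1 : ZMod n) ⊗ₜ[ℤ] x = 0 ↔ ∃ y : M, x = (n : ℤ) • y := by
  refine ⟨fun hx ↦ ?_, ?_⟩
  · let b := Free.chooseBasis ℤ M
    have hdvd : ∀ i, (n : ℤ) ∣ b.repr x i := fun i ↦ by
      have := congrArg (fun t ↦ (b.baseChange (ZMod n)).repr t i) hx
      simpa [Basis.baseChange_repr_tmul, ZMod.intCast_zmod_eq_zero_iff_dvd] using this
    refine ⟨b.repr.symm ((b.repr x).mapRange (· / (n : ℤ)) (Int.zero_ediv _)), b.repr.injective ?_⟩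
    ext i
    simp [Int.mul_ediv_cancel' (hdvd i)]
  · rintro ⟨y, rfl⟩
    rw [← TensorProduct.smul_tmul]
    simp

theorem LinearMap.baseChange_sub_one_pow_tmul {R A M : Type*} [CommRing R] [Ring A] [Algebra R A]
    [AddCommGroup M] [Module R M] (f : Module.End R M) (n : ℕ) (a : A) (x : M) :
    ((f.baseChange A - 1) ^ n) (a ⊗ₜ[R] x) = a ⊗ₜ (((f - 1) ^ n) x) := by
  rw [← baseChange_one, ← baseChange_sub, ← baseChange_pow, baseChange_tmul]

section ExtensionModule

variable {O : Type*} [CommRing O] {ζ a : O} {A : Ideal O} {φ : Module.End ℤ (A × ℤ)}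

theorem sub_one_pow_succ_apply_zero_one (haA : a ∈ A)
    (hφ : ∀ x : A × ℤ, ((φ x).1 : O) = ζ * (x.1 : O) + x.2 • a ∧ (φ x).2 = x.2) (k : ℕ) :
    ((φ - 1) ^ (k + 1)) (0, 1) = (⟨(ζ - 1) ^ k * a, A.mul_mem_left _ haA⟩, 0) := by
  induction k with
  | zero => ext <;> simp [(hφ _).1, (hφ _).2]
  | succ k ih =>
    rw [pow_succ', Module.End.mul_apply, ih]
    ext <;> simp [(hφ _).1, (hφ _).2]
    ring

variable [IsDomain O] {p : ℕ} [Fact p.Prime] [Module.Free ℤ A]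

theorem baseChange_sub_one_pow_apply_eq_zero (hζ : IsPrimitiveRoot ζ p) (haA : a ∈ A)
    (hφ : ∀ x : A × ℤ, ((φ x).1 : O) = ζ * (x.1 : O) + x.2 • a ∧ (φ x).2 = x.2) :
    ((φ.baseChange (ZMod p) - 1) ^ p) (1 ⊗ₜ (0, 1)) = 0 := by
  obtain ⟨u, hu⟩ := hζ.associated_sub_one_pow_prime
  have hlast := sub_one_pow_succ_apply_zero_one haA hφ (p - 1)
  rw [Nat.sub_add_cancel (Fact.out : p.Prime).one_le] at hlast
  rw [LinearMap.baseChange_sub_one_pow_tmul, hlast, one_tmul_eq_zero_iff_exists_eq_smul]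
  refine ⟨(⟨↑u⁻¹ * a, A.mul_mem_left _ haA⟩, 0), Prod.ext (Subtype.ext ?_) rfl⟩
  simp [zsmul_eq_mul, ← hu, mul_assoc]

theorem baseChange_sub_one_pow_pred_apply_ne_zero (hζ : IsPrimitiveRoot ζ p) (haA : a ∈ A)
    (ha : ¬ ∃ y ∈ A, a = (ζ - 1) * y)
    (hφ : ∀ x : A × ℤ, ((φ x).1 : O) = ζ * (x.1 : O) + x.2 • a ∧ (φ x).2 = x.2) :
    ((φ.baseChange (ZMod p) - 1) ^ (p - 1)) (1 ⊗ₜ (0, 1)) ≠ 0 := by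
  have hp2 := (Fact.out : p.Prime).two_le
  obtain ⟨u, hu⟩ := hζ.associated_sub_one_pow_prime
  have hprev := sub_one_pow_succ_apply_zero_one haA hφ (p - 2)
  rw [show p - 2 + 1 = p - 1 by omega] at hprev
  rw [LinearMap.baseChange_sub_one_pow_tmul, hprev, Ne, one_tmul_eq_zero_iff_exists_eq_smul]
  rintro ⟨y, hy⟩
  refine ha ⟨u * y.1, A.mul_mem_left _ y.1.2, ?_⟩
  have := congrArg (fun z ↦ (z.1 : O)) hy
  simp [← hu] at this
  rw [show p - 1 = p - 2 + 1 by omega, pow_succ, mul_assoc, mul_assoc] at this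
  exact mul_left_cancel₀ (pow_ne_zero _ (sub_ne_zero.mpr (hζ.ne_one (by omega)))) this

end ExtensionModule

theorem tensor_Aa_isJordanBlock_p_general
    (p : ℕ) (hp : p.Prime)
    (O : Type) [CommRing O] [IsDomain O] [CharZero O]
    (ζ : O) (hζ : IsPrimitiveRoot ζ p) (hO : Algebra.adjoin ℤ {ζ} = ⊤)
    (A : Ideal O) (a : O) (haA : a ∈ A)
    (ha : ¬ ∃ y ∈ A, a = (ζ - 1) * y)
    (φ : (A × ℤ) →ₗ[ℤ] (A × ℤ))
    (hφ : ∀ x : A × ℤ,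
      ((φ x).1 : O) = ζ * (x.1 : O) + x.2 • a ∧ (φ x).2 = x.2) :
    ∃ e : (ZMod p ⊗[ℤ] (A × ℤ)) ≃ₗ[ZMod p] (Fin p → ZMod p),
      ∀ v, e (LinearMap.baseChange (ZMod p) φ v) = Matrix.toLin' (jordanBlock p p) (e v) := by
  have : Fact p.Prime := ⟨hp⟩
  have hA : A ≠ ⊥ := by
    rintro rfl
    exact ha ⟨0, zero_mem _, by simpa using haA⟩
  have := hζ.finite_int_of_adjoin_eq_top hp.pos hO
  have hdim : finrank (ZMod p) (ZMod p ⊗[ℤ] (A × ℤ)) = p := by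
    rw [finrank_baseChange, finrank_prod, hζ.finrank_int_ideal_eq_totient hp.pos hO hA,
      Nat.totient_prime hp, finrank_self]
    have := hp.two_le
    omega
  exact exists_linearEquiv_comp_eq_jordanBlock hdim
    (baseChange_sub_one_pow_apply_eq_zero hζ haA hφ)
    (baseChange_sub_one_pow_pred_apply_ne_zero hζ haA ha hφ)

/-- Lemma: let `O = ℤ[ξ_p]` (a characteristic-zero domain generated over `ℤ` by a
primitive `p`-th root of unity `ζ`), `A` an ideal of `O` and `a ∈ A` with
`a ∉ (ζ - 1)A`.  Let `(A, a)` be the `ℤ`-module `A ⊕ ℤ` with the order-`p`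
automorphism `φ(x, k) = (ζx + k a, k)`.  Then `(A, a) ⊗ 𝔽ₚ` is isomorphic as an
`𝔽ₚ[G]`-module to `N_p`, the single unipotent Jordan block of size `p`. -/
theorem tensor_Aa_isJordanBlock_p
    (p : ℕ) (hp : p.Prime)
    (O : Type) [CommRing O] [IsDomain O] [CharZero O]
    (ζ : O) (hζ : IsPrimitiveRoot ζ p) (hO : Algebra.adjoin ℤ {ζ} = ⊤)
    (A : Ideal O) (hA : A ≠ ⊥) (a : O) (haA : a ∈ A)
    (ha : ¬ ∃ y ∈ A, a = (ζ - 1) * y)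
    (φ : (A × ℤ) →ₗ[ℤ] (A × ℤ))
    (hφ : ∀ x : A × ℤ,
      ((φ x).1 : O) = ζ * (x.1 : O) + x.2 • a ∧ (φ x).2 = x.2) :
    ∃ e : (ZMod p ⊗[ℤ] (A × ℤ)) ≃ₗ[ZMod p] (Fin p → ZMod p),
      ∀ v, e (LinearMap.baseChange (ZMod p) φ v) = Matrix.toLin' (jordanBlock p p) (e v) :=
  tensor_Aa_isJordanBlock_p_general p hp O ζ hζ hO A a haA ha φ hφ
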